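/- Let ℚ^tr ⊆ algebraic closure of ℚ be the field of all totally real algebraic numbers, i.e. all algebraic numbers α such that every field embedding of ℚ(α) into ℂ has image contained in ℝ. Then for every rational prime p, there is no ring homomorphism from ℚ^tr into any finite field extension of the p-adic field ℚ_p; that is, ℚ^tr has unbounded local degrees at every rational prime. -/

import Mathlib

open IntermediateField

set_option maxHeartbeats 2000000
set_option synthInstance.maxHeartbeats 400000

open Polynomial Module

lemma padic_root_of_unity_bound {p : ℕ} [Fact p.Prime] (K : Type*) [Field K] [Algebra ℚ_[p] K]
    [FiniteDimensional ℚ_[p] K]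
    {z : K} {ℓ : ℕ} (hℓ : ℓ.Prime) (hlp : ℓ ≠ p) (hz : z ^ ℓ = 1) (hz1 : z ≠ 1) :
    ℓ ≤ p ^ (finrank ℚ_[p] K) := by
  letI : Algebra ℤ_[p] K := ((algebraMap ℚ_[p] K).comp (algebraMap ℤ_[p] ℚ_[p])).toAlgebra
  haveI : IsScalarTower ℤ_[p] ℚ_[p] K := IsScalarTower.of_algebraMap_eq fun x => rfl
  have halg_inj : Function.Injective (algebraMap ℤ_[p] K) :=
    (algebraMap ℚ_[p] K).injective.comp (IsFractionRing.injective ℤ_[p] ℚ_[p])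
  have hz_int : IsIntegral ℤ_[p] z := by
    refine ⟨X ^ ℓ - C 1, monic_X_pow_sub_C 1 hℓ.ne_zero, ?_⟩
    simp [hz]
  set R := Algebra.adjoin ℤ_[p] ({z} : Set K) with hR
  haveI : Module.Finite ℤ_[p] R :=
    ⟨(Subalgebra.toSubmodule R).fg_top.mpr hz_int.fg_adjoin_singleton⟩
  haveI : NoZeroSMulDivisors ℤ_[p] K :=
    ⟨fun {c x} h => by rw [Algebra.smul_def, mul_eq_zero, map_eq_zero_iff _ halg_inj] at h; exact h⟩
  haveI : NoZeroSMulDivisors ℤ_[p] R :=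
    Function.Injective.noZeroSMulDivisors
      ((Subalgebra.toSubmodule R).subtype) Subtype.coe_injective rfl (fun c x => rfl)
  haveI : Module.Free ℤ_[p] R := Module.free_of_finite_type_torsion_free'
  -- the rank of R is at most the dimension of K
  let b := Module.Free.chooseBasis ℤ_[p] R
  have hli : LinearIndependent ℤ_[p] (fun i => ((b i : R) : K)) :=
    b.linearIndependent.map' (Subalgebra.toSubmodule R).subtype (Submodule.ker_subtype _)
  have hliQ : LinearIndependent ℚ_[p] (fun i => ((b i : R) : K)) :=
    hli.localization ℚ_[p] (nonZeroDivisors ℤ_[p])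
  have hcard : Fintype.card (Module.Free.ChooseBasisIndex ℤ_[p] ↥R) ≤ finrank ℚ_[p] K :=
    hliQ.fintype_card_le_finrank
  -- the ideal (p) of R
  set J : Ideal R := Ideal.span {((p : ℕ) : R)} with hJdef
  have hpR : (algebraMap ℤ_[p] R) ((p:ℕ):ℤ_[p]) = ((p:ℕ):R) := by
    simp
  have hJ_ne : J ≠ ⊤ := by
    intro hJ
    have hle : (⊤ : Submodule ℤ_[p] R) ≤ (Ideal.span {((p:ℕ):ℤ_[p])}) • ⊤ := by
      intro x _
      have hx : x ∈ J := hJ ▸ Submodule.mem_top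
      obtain ⟨r, hr⟩ := Ideal.mem_span_singleton'.mp hx
      have : x = ((p:ℕ):ℤ_[p]) • r := by
        rw [Algebra.smul_def, hpR, mul_comm, hr]
      rw [this]
      exact Submodule.smul_mem_smul (Ideal.subset_span rfl) Submodule.mem_top
    have hjac : (Ideal.span {((p:ℕ):ℤ_[p])}) ≤ Ideal.jacobson ⊥ := by
      rw [IsLocalRing.jacobson_eq_maximalIdeal (⊥ : Ideal ℤ_[p]) bot_ne_top,
        ← PadicInt.maximalIdeal_eq_span_p]
    have := Submodule.eq_bot_of_le_smul_of_le_jacobson_bot _ ⊤ Module.Finite.fg_top hle hjac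
    exact one_ne_zero ((Submodule.eq_bot_iff _).mp this 1 Submodule.mem_top)
  -- z as an element of R
  set z' : R := ⟨z, Algebra.subset_adjoin rfl⟩ with hz'def
  have hz'pow : z' ^ ℓ = 1 := by
    ext; simpa using hz
  have hz'unit : IsUnit z' := by
    refine IsUnit.of_mul_eq_one (a := z') (z' ^ (ℓ - 1)) ?_
    rw [← pow_succ', Nat.sub_add_cancel hℓ.pos, hz'pow]
  haveI : Fact ℓ.Prime := ⟨hℓ⟩
  have hord : orderOf z = ℓ := orderOf_eq_prime hz hz1
  -- key step : z'^k - 1 is not in J for 0 < k < ℓ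
  have key : ∀ k : ℕ, 0 < k → k < ℓ → z' ^ k - 1 ∉ J := by
    intro k hk0 hkl hmem
    set w : R := z' ^ k with hwdef
    have hw1 : w ≠ 1 := by
      intro h
      have : z ^ k = 1 := congrArg Subtype.val h
      have := orderOf_dvd_of_pow_eq_one this
      rw [hord] at this
      exact absurd (Nat.le_of_dvd hk0 this) (not_le.mpr hkl)
    have hwl : w ^ ℓ = 1 := by
      rw [hwdef, ← pow_mul, mul_comm, pow_mul, hz'pow, one_pow]
    have hsum : (∑ i ∈ Finset.range ℓ, w ^ i) = 0 := by
      have h2 : (∑ i ∈ Finset.range ℓ, w ^ i) * (w - 1) = w ^ ℓ - 1 := geom_sum_mul w ℓ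
      rw [hwl, sub_self] at h2
      rcases mul_eq_zero.mp h2 with h | h
      · exact h
      · exact absurd (sub_eq_zero.mp h) hw1
    have h3 : (∑ i ∈ Finset.range ℓ, (w ^ i - 1))
        = (w - 1) * ∑ i ∈ Finset.range ℓ, (∑ j ∈ Finset.range i, w ^ j) := by
      rw [Finset.mul_sum]
      exact Finset.sum_congr rfl fun i _ => by rw [mul_comm, geom_sum_mul]
    have h4 : (∑ i ∈ Finset.range ℓ, (w ^ i - 1)) = - (ℓ : R) := by
      rw [Finset.sum_sub_distrib, hsum]
      simp
    have hlunit : IsUnit ((ℓ : ℕ) : R) := by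
      have h5 : IsUnit ((ℓ : ℕ) : ℤ_[p]) := by
        rw [PadicInt.isUnit_iff]
        refine le_antisymm (PadicInt.norm_le_one _) ?_
        by_contra hlt
        push_neg at hlt
        have : ((p:ℕ):ℤ) ∣ ((ℓ:ℕ):ℤ) := by
          have := (PadicInt.norm_int_lt_one_iff_dvd (ℓ:ℤ)).mp (by exact_mod_cast hlt)
          exact_mod_cast this
        have hdvd : p ∣ ℓ := by exact_mod_cast this
        rcases (Nat.Prime.eq_one_or_self_of_dvd hℓ p hdvd) with h | h
        · exact (Fact.out : p.Prime).one_lt.ne' h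
        · exact hlp h.symm
      have := h5.map (algebraMap ℤ_[p] R)
      rwa [map_natCast] at this
    have hwunit : IsUnit (w - 1) := by
      refine isUnit_of_mul_isUnit_left (y := (-(∑ i ∈ Finset.range ℓ, (∑ j ∈ Finset.range i, w ^ j)))) ?_
      rw [mul_neg, ← h3, h4, neg_neg]
      exact hlunit
    exact hJ_ne (Ideal.eq_top_of_isUnit_mem J hmem hwunit)
  classical
  -- distinct powers in the quotient
  have aux : ∀ i j : ℕ, i < j → j < ℓ →
      Ideal.Quotient.mk J (z' ^ i) ≠ Ideal.Quotient.mk J (z' ^ j) := by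
    intro i j hij hjl heq
    have hmem : z' ^ i - z' ^ j ∈ J := (Ideal.Quotient.eq (I := J)).mp heq
    have hfact : z' ^ i - z' ^ j = - (z' ^ i * (z' ^ (j - i) - 1)) := by
      rw [mul_sub, ← pow_add, mul_one, Nat.add_sub_cancel' hij.le]
      ring
    rw [hfact] at hmem
    have hmem2 : z' ^ i * (z' ^ (j - i) - 1) ∈ J := by
      have := J.neg_mem hmem
      rwa [neg_neg] at this
    have hmem3 : z' ^ (j - i) - 1 ∈ J :=
      (Ideal.unit_mul_mem_iff_mem J (hz'unit.pow i)).mp hmem2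
    exact key (j - i) (by omega) (by omega) hmem3
  have hinj : Function.Injective (fun i : Fin ℓ => Ideal.Quotient.mk J (z' ^ (i : ℕ))) := by
    intro i j hij
    rcases lt_trichotomy (i : ℕ) (j : ℕ) with h | h | h
    · exact absurd hij (aux _ _ h j.isLt)
    · exact Fin.ext h
    · exact absurd hij.symm (aux _ _ h i.isLt)
  -- the quotient is small
  have hmkalg : ∀ c : ℤ_[p], Ideal.Quotient.mk J (algebraMap ℤ_[p] ↥R c)
      = (((PadicInt.toZMod c).val : ℕ) : ↥R ⧸ J) := by
    intro c
    have hmem : c - (ZMod.cast (PadicInt.toZMod c) : ℤ_[p]) ∈ IsLocalRing.maximalIdeal ℤ_[p] :=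
      PadicInt.toZMod_spec c
    rw [PadicInt.maximalIdeal_eq_span_p] at hmem
    obtain ⟨t, ht⟩ := Ideal.mem_span_singleton'.mp hmem
    have hJm : algebraMap ℤ_[p] ↥R c - algebraMap ℤ_[p] ↥R (ZMod.cast (PadicInt.toZMod c)) ∈ J := by
      rw [← map_sub, ← ht, map_mul]
      have hp' : (algebraMap ℤ_[p] ↥R) (((p:ℕ):ℤ_[p])) ∈ J := by
        rw [hpR]
        exact Ideal.subset_span rfl
      exact J.mul_mem_left _ hp'
    have h7 := (Ideal.Quotient.eq (I := J)).mpr hJm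
    rw [h7, ← ZMod.natCast_val, map_natCast, map_natCast]
  let g : ((Module.Free.ChooseBasisIndex ℤ_[p] ↥R) → ZMod p) → (↥R ⧸ J) :=
    fun c => ∑ i, (((c i).val : ℕ) : ↥R ⧸ J) * Ideal.Quotient.mk J (b i)
  have hsurj : Function.Surjective g := by
    intro y
    obtain ⟨r, rfl⟩ := Ideal.Quotient.mk_surjective y
    refine ⟨fun i => PadicInt.toZMod (b.repr r i), ?_⟩
    have hrepr : (∑ i, b.repr r i • b i) = r := b.sum_repr r
    conv_rhs => rw [← hrepr]
    rw [map_sum]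
    refine Finset.sum_congr rfl fun i _ => ?_
    rw [Algebra.smul_def, map_mul, hmkalg]
  haveI : Finite (↥R ⧸ J) := Finite.of_surjective g hsurj
  have h8 : ℓ ≤ Nat.card (↥R ⧸ J) := by
    have := Nat.card_le_card_of_injective _ hinj
    simpa using this
  have h9 : Nat.card (↥R ⧸ J) ≤ p ^ (Fintype.card (Module.Free.ChooseBasisIndex ℤ_[p] ↥R)) := by
    have := Nat.card_le_card_of_surjective g hsurj
    rwa [Nat.card_fun, Nat.card_zmod, Nat.card_eq_fintype_card (α := Module.Free.ChooseBasisIndex ℤ_[p] ↥R)] at this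
  exact le_trans (le_trans h8 h9) (Nat.pow_le_pow_right (Fact.out : p.Prime).pos hcard)

lemma isTotallyRealNumber_add_inv {ζ : AlgebraicClosure ℚ} {ℓ : ℕ} (hℓ : ℓ ≠ 0)
    (hζ : ζ ^ ℓ = 1) :
    (∀ φ : ℚ⟮ζ + ζ⁻¹⟯ →+* ℂ, ∀ y : ℚ⟮ζ + ζ⁻¹⟯, ∃ r : ℝ, φ y = (r : ℂ)) := by
  intro φ y
  letI : Algebra (↥ℚ⟮ζ + ζ⁻¹⟯) ℂ := φ.toAlgebra
  haveI : Algebra.IsAlgebraic (↥ℚ⟮ζ + ζ⁻¹⟯) (AlgebraicClosure ℚ) :=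
    by haveI : Algebra.IsAlgebraic ℚ (AlgebraicClosure ℚ) := (by convert AlgebraicClosure.isAlgebraic ℚ; exacts [rfl, Subsingleton.elim _ _]); exact Algebra.IsAlgebraic.tower_top (K := ℚ) _
  let ψ : AlgebraicClosure ℚ →ₐ[↥ℚ⟮ζ + ζ⁻¹⟯] ℂ := IsAlgClosed.lift
  have hφψ : φ y = ψ (y : AlgebraicClosure ℚ) := by
    have := (ψ.commutes y).symm
    rwa [IntermediateField.algebraMap_apply] at this
  set S : Subfield ℂ := Complex.ofRealHom.fieldRange with hS
  have hψα : ψ (ζ + ζ⁻¹) ∈ S := by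
    set w : ℂ := ψ ζ with hw
    have hwl : w ^ ℓ = 1 := by rw [hw, ← map_pow, hζ, map_one]
    have habs : ‖w‖ = 1 := by
      have h1 : ‖w‖ ^ ℓ = 1 := by rw [← norm_pow, hwl, norm_one]
      rcases (pow_eq_one_iff_cases).mp h1 with h | h | h
      · exact absurd h hℓ
      · exact h
      · nlinarith [norm_nonneg w, h.1]
    have hinv : w⁻¹ = (starRingEnd ℂ) w := by
      refine inv_eq_of_mul_eq_one_right ?_
      rw [Complex.mul_conj, ← Complex.sq_norm, habs]
      norm_num
    have h2 : ψ (ζ + ζ⁻¹) = w + (starRingEnd ℂ) w := by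
      rw [map_add, map_inv₀, ← hw, hinv]
    rw [h2, Complex.add_conj]
    exact ⟨2 * w.re, by push_cast [Complex.ofRealHom_eq_coe]; ring⟩
  have hmem : ∀ x ∈ IntermediateField.adjoin ℚ {ζ + ζ⁻¹}, ψ x ∈ S := by
    intro x hx
    induction hx using IntermediateField.adjoin_induction with
    | mem x hx => rwa [Set.mem_singleton_iff.mp hx]
    | algebraMap x =>
        rw [eq_ratCast (algebraMap ℚ (AlgebraicClosure ℚ)) x, map_ratCast]
        exact ⟨(x : ℝ), by push_cast [Complex.ofRealHom_eq_coe]; ring⟩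
    | add x y hx hy ihx ihy => rw [map_add]; exact S.add_mem ihx ihy
    | inv x hx ihx => rw [map_inv₀]; exact S.inv_mem ihx
    | mul x y hx hy ihx ihy => rw [map_mul]; exact S.mul_mem ihx ihy
  obtain ⟨r, hr⟩ := hmem (y : AlgebraicClosure ℚ) y.2
  refine ⟨r, ?_⟩
  rw [hφψ, ← hr, Complex.ofRealHom_eq_coe]

/-- `L` can be embedded in some finite extension of `ℚ_p` (bounded local degrees at `p`). -/
def HasBoundedLocalDegreesAt (p : ℕ) (hp : p.Prime) (L : Type*) [Field L] : Prop :=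
  letI : Fact p.Prime := ⟨hp⟩
  ∃ (E : Type) (_ : Field E) (_ : Algebra ℚ_[p] E),
    FiniteDimensional ℚ_[p] E ∧ Nonempty (L →+* E)

/-- An algebraic number `x` is totally real if every field embedding of `ℚ(x)` into `ℂ`
has image contained in `ℝ`. -/
def IsTotallyRealNumber (x : AlgebraicClosure ℚ) : Prop :=
  ∀ φ : ℚ⟮x⟯ →+* ℂ, ∀ y : ℚ⟮x⟯, ∃ r : ℝ, φ y = (r : ℂ)

/-- The field `ℚ^tr` of all totally real algebraic numbers (the totally real numbers form
a subfield of the algebraic closure of `ℚ`, so it coincides with the generated field). -/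
noncomputable def totallyRealField : IntermediateField ℚ (AlgebraicClosure ℚ) :=
  IntermediateField.adjoin ℚ {x : AlgebraicClosure ℚ | IsTotallyRealNumber x}

/-- The field `ℚ^tr` of totally real algebraic numbers has unbounded
local degrees at every rational prime: it admits no ring homomorphism into any finite
extension of `ℚ_p`. -/
theorem totally_real_unbounded_local_degrees (p : ℕ) (hp : p.Prime) :
    ¬ HasBoundedLocalDegreesAt p hp totallyRealField := by
  haveI : Fact p.Prime := ⟨hp⟩
  rintro ⟨E, _, _, hfin, ⟨f⟩⟩
  set d := finrank ℚ_[p] E with hd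
  obtain ⟨ℓ, hℓge, hℓ⟩ := Nat.exists_infinite_primes (p ^ (2 * d) + p + 3)
  have hpd1 : 1 ≤ p ^ (2 * d) := Nat.one_le_pow _ _ hp.pos
  have hℓ0 : ℓ ≠ 0 := hℓ.ne_zero
  have hℓ_ne_p : ℓ ≠ p := by omega
  have hℓ_gt2 : 2 < ℓ := by omega
  -- a primitive ℓ-th root of unity in the algebraic closure of ℚ
  haveI : NeZero ((ℓ : ℕ) : AlgebraicClosure ℚ) :=
    ⟨Nat.cast_ne_zero.mpr hℓ0⟩
  obtain ⟨ζ, hζ⟩ := HasEnoughRootsOfUnity.exists_primitiveRoot (AlgebraicClosure ℚ) ℓ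
  have hζl : ζ ^ ℓ = 1 := hζ.pow_eq_one
  have hζ0 : ζ ≠ 0 := by
    intro h
    rw [h, zero_pow hℓ0] at hζl
    exact zero_ne_one hζl
  have hζ1 : ζ ≠ 1 := hζ.ne_one (by omega)
  have hζinv : ζ⁻¹ ^ ℓ = 1 := by rw [inv_pow, hζl, inv_one]
  have hζmul : ζ * ζ⁻¹ = 1 := mul_inv_cancel₀ hζ0
  -- the totally real element
  have hmemα : ζ + ζ⁻¹ ∈ totallyRealField :=
    IntermediateField.subset_adjoin _ _ (isTotallyRealNumber_add_inv hℓ0 hζl)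
  set α' : totallyRealField := ⟨ζ + ζ⁻¹, hmemα⟩ with hα'
  -- the quadratic divides X^ℓ - 1 over the totally real field
  have hdvd : (X ^ 2 - C α' * X + 1 : Polynomial totallyRealField) ∣ X ^ ℓ - 1 := by
    rw [← Polynomial.map_dvd_map' (algebraMap totallyRealField (AlgebraicClosure ℚ))]
    have hmap1 : (X ^ 2 - C α' * X + 1 : Polynomial totallyRealField).map
        (algebraMap totallyRealField (AlgebraicClosure ℚ))
        = X ^ 2 - C (ζ + ζ⁻¹) * X + 1 := by
      simp; rw [← C_add]
    have hmap2 : (X ^ ℓ - 1 : Polynomial totallyRealField).map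
        (algebraMap totallyRealField (AlgebraicClosure ℚ)) = X ^ ℓ - 1 := by
      simp
    rw [hmap1, hmap2]
    have hfactor : (X ^ 2 - C (ζ + ζ⁻¹) * X + 1 : Polynomial (AlgebraicClosure ℚ))
        = (X - C ζ) * (X - C ζ⁻¹) := by
      have h2 : (X - C ζ) * (X - C ζ⁻¹)
          = X ^ 2 - (C ζ + C ζ⁻¹) * X + C ζ * C ζ⁻¹ := by ring
      rw [h2, ← C_add, ← C_mul, hζmul, C_1]
    have hne : ζ ≠ ζ⁻¹ := by
      intro h
      have h2 : ζ ^ 2 = 1 := by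
        rw [pow_two]; nth_rewrite 2 [h]; exact hζmul
      have := Nat.le_of_dvd (by norm_num) (hζ.pow_eq_one_iff_dvd 2 |>.mp h2)
      omega
    have hdvd1 : (X - C ζ) ∣ (X ^ ℓ - 1 : Polynomial (AlgebraicClosure ℚ)) :=
      dvd_iff_isRoot.mpr (by simp [Polynomial.IsRoot, hζl])
    have hdvd2 : (X - C ζ⁻¹) ∣ (X ^ ℓ - 1 : Polynomial (AlgebraicClosure ℚ)) :=
      dvd_iff_isRoot.mpr (by simp [Polynomial.IsRoot, hζinv])
    rw [hfactor]
    exact (isCoprime_X_sub_C_of_isUnit_sub (sub_ne_zero.2 hne).isUnit).mul_dvd hdvd1 hdvd2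
  -- push to E
  have hdvdE : (X ^ 2 - C (f α') * X + 1 : Polynomial E) ∣ X ^ ℓ - 1 := by
    have h2 := Polynomial.map_dvd (f : totallyRealField →+* E) hdvd
    simpa using h2
  -- move to the algebraic closure of E
  set a : AlgebraicClosure E := algebraMap E (AlgebraicClosure E) (f α') with ha
  set q : Polynomial (AlgebraicClosure E) := X ^ 2 - C a * X + 1 with hq
  have hqeq : q = C 1 * X ^ 2 + C (-a) * X + C 1 := by simp only [hq, map_neg, C_1]; ring
  have hqdeg : q.degree ≠ 0 := by
    rw [hqeq, Polynomial.degree_quadratic one_ne_zero]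
    simp
  obtain ⟨z, hzroot⟩ := IsAlgClosed.exists_root q hqdeg
  have hzeval : z ^ 2 - a * z + 1 = 0 := by
    have := hzroot
    simpa [hq, Polynomial.IsRoot] using this
  -- z is an ℓ-th root of unity
  have hdvdAC : q ∣ (X ^ ℓ - 1 : Polynomial (AlgebraicClosure E)) := by
    have h2 := Polynomial.map_dvd (algebraMap E (AlgebraicClosure E)) hdvdE
    have hmap1 : (X ^ 2 - C (f α') * X + 1 : Polynomial E).map
        (algebraMap E (AlgebraicClosure E)) = q := by simp [hq, ha]
    have hmap2 : (X ^ ℓ - 1 : Polynomial E).map (algebraMap E (AlgebraicClosure E))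
        = X ^ ℓ - 1 := by simp
    rwa [hmap1, hmap2] at h2
  have hzl : z ^ ℓ = 1 := by
    obtain ⟨c, hc⟩ := hdvdAC
    have h2 := congrArg (Polynomial.eval z) hc
    simp only [Polynomial.eval_sub, Polynomial.eval_pow, Polynomial.eval_one,
      Polynomial.eval_mul, Polynomial.eval_X] at h2
    have h3 : Polynomial.eval z q = 0 := hzroot
    rw [h3, zero_mul] at h2
    exact sub_eq_zero.mp h2
  -- z is not 1
  have hz1 : z ≠ 1 := by
    intro h
    rw [h] at hzeval
    have ha2 : a = 2 := by
      have : (2 : AlgebraicClosure E) - a = 0 := by linear_combination hzeval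
      linear_combination -this
    have hfα : f α' = 2 := by
      apply (algebraMap E (AlgebraicClosure E)).injective
      rw [← ha, ha2]; exact (map_ofNat (algebraMap E (AlgebraicClosure E)) 2).symm
    have hα2 : α' = 2 := f.injective (by rw [hfα]; exact (map_ofNat f 2).symm)
    have hαval : ζ + ζ⁻¹ = 2 := by
      have := congrArg Subtype.val hα2
      exact this.trans rfl
    have hζeq : (ζ - 1) ^ 2 = 0 := by
      have h3 : ζ * (ζ + ζ⁻¹) = ζ * 2 := by rw [hαval]
      rw [mul_add, hζmul] at h3
      ring_nf
      linear_combination h3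
    exact hζ1 (by have := pow_eq_zero_iff (n := 2) (by norm_num) |>.mp hζeq; linear_combination this)
  -- the field generated by z over ℚ_p
  have hz_int : IsIntegral ℚ_[p] z := by
    refine ⟨X ^ ℓ - C 1, monic_X_pow_sub_C 1 hℓ0, ?_⟩
    simp [hzl]
  haveI hKfin : FiniteDimensional ℚ_[p] (ℚ_[p]⟮z⟯ : IntermediateField ℚ_[p] (AlgebraicClosure E)) :=
    IntermediateField.adjoin.finiteDimensional hz_int
  set K : IntermediateField ℚ_[p] (AlgebraicClosure E) := ℚ_[p]⟮z⟯ with hK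
  set z' : K := IntermediateField.AdjoinSimple.gen ℚ_[p] z with hz'
  have hz'l : z' ^ ℓ = 1 := by
    ext
    push_cast
    exact hzl
  have hz'1 : z' ≠ 1 := by
    intro h
    exact hz1 (congrArg Subtype.val h)
  have hbound := padic_root_of_unity_bound K hℓ hℓ_ne_p hz'l hz'1
  -- bound the dimension of K
  have hPmonic : (X ^ 2 - C (f α') * X + 1 : Polynomial E).Monic := by
    monicity!
  have hPaeval : (Polynomial.aeval z) (X ^ 2 - C (f α') * X + 1 : Polynomial E) = 0 := by
    have h9 : (Polynomial.aeval z) (X ^ 2 - C (f α') * X + 1 : Polynomial E)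
        = z ^ 2 - a * z + 1 := by
      simp [ha]
    rw [h9, hzeval]
  have hz_intE : IsIntegral E z := ⟨X ^ 2 - C (f α') * X + 1, hPmonic, hPaeval⟩
  haveI : FiniteDimensional E (E⟮z⟯ : IntermediateField E (AlgebraicClosure E)) :=
    IntermediateField.adjoin.finiteDimensional hz_intE
  have hfr2 : finrank E (E⟮z⟯ : IntermediateField E (AlgebraicClosure E)) ≤ 2 := by
    rw [IntermediateField.adjoin.finrank hz_intE]
    have h9 := minpoly.degree_le_of_ne_zero E z hPmonic.ne_zero hPaeval
    have h10 : ((X ^ 2 - C (f α') * X + 1 : Polynomial E)).degree = 2 := by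
      compute_degree!
    rw [h10] at h9
    have := Polynomial.natDegree_le_iff_degree_le.mpr (by exact_mod_cast h9)
    exact_mod_cast this
  haveI : FiniteDimensional ℚ_[p] (E⟮z⟯ : IntermediateField E (AlgebraicClosure E)) :=
    FiniteDimensional.trans ℚ_[p] E (E⟮z⟯ : IntermediateField E (AlgebraicClosure E))
  have hfrE : finrank ℚ_[p] (E⟮z⟯ : IntermediateField E (AlgebraicClosure E)) ≤ 2 * d := by
    have h9 := finrank_mul_finrank ℚ_[p] E (E⟮z⟯ : IntermediateField E (AlgebraicClosure E))
    calc finrank ℚ_[p] (E⟮z⟯ : IntermediateField E (AlgebraicClosure E))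
        = d * finrank E (E⟮z⟯ : IntermediateField E (AlgebraicClosure E)) := h9.symm
      _ ≤ d * 2 := Nat.mul_le_mul_left d hfr2
      _ = 2 * d := Nat.mul_comm d 2
  have hKle : K ≤ IntermediateField.restrictScalars ℚ_[p]
      (E⟮z⟯ : IntermediateField E (AlgebraicClosure E)) := by
    rw [hK]
    apply IntermediateField.adjoin_le_iff.mpr
    intro x hx
    rw [Set.mem_singleton_iff.mp hx]
    exact IntermediateField.mem_adjoin_simple_self E z
  have hfrK : finrank ℚ_[p] K ≤ 2 * d := by
    have h9 : finrank ℚ_[p] K ≤ finrank ℚ_[p] (IntermediateField.restrictScalars ℚ_[p]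
        (E⟮z⟯ : IntermediateField E (AlgebraicClosure E))) := by
      haveI : FiniteDimensional ℚ_[p] (IntermediateField.restrictScalars ℚ_[p]
          (E⟮z⟯ : IntermediateField E (AlgebraicClosure E))) := by
        assumption
      exact LinearMap.finrank_le_finrank_of_injective
        (f := (IntermediateField.inclusion hKle).toLinearMap)
        (fun x y hxy => by
          apply Subtype.ext
          have := congrArg Subtype.val hxy
          exact this)
    exact le_trans h9 hfrE
  have hfinal : ℓ ≤ p ^ (2 * d) :=
    le_trans hbound (Nat.pow_le_pow_right hp.pos hfrK)
  omega
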